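/- arXiv:1809.03733 — 2 statements merged into one kernel-verified Lean document; each statement's English description precedes it below -/
import Mathlib

section
/- Let J ∈ ℝ^{m×m} satisfy J + Jᵀ > 0 (positive definite), and let Z ∈ ℝ^{m×m} satisfy Z + Zᵀ ≥ 0 (positive semidefinite). Then the matrix I + J Z is invertible. -/
open Matrix

/-!
Suppose `(1 + J Z) v = 0` and put `y = Z v`, so that `v = -J y`. Pairing with `y` gives
`vᵀ Z v = yᵀ v = -yᵀ J y`. The quadratic form of a matrix only sees its symmetric part, so the
left side is `≥ 0` and, unless `y = 0`, the right side is `< 0`. Hence `y = 0`, and then `v = -J y = 0`.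
-/

namespace Matrix

variable {n R : Type*} [Fintype n]

lemma dotProduct_add_transpose_mulVec_self [CommRing R] (A : Matrix n n R) (x : n → R) :
    x ⬝ᵥ ((A + Aᵀ) *ᵥ x) = x ⬝ᵥ (A *ᵥ x) + x ⬝ᵥ (A *ᵥ x) := by
  rw [add_mulVec, dotProduct_add, dotProduct_transpose_mulVec]

variable [Field R] [LinearOrder R] [IsStrictOrderedRing R] [StarRing R] [TrivialStar R]

lemma PosSemidef.dotProduct_mulVec_nonneg_of_add_transpose {A : Matrix n n R}
    (hA : (A + Aᵀ).PosSemidef) (x : n → R) : 0 ≤ x ⬝ᵥ (A *ᵥ x) := by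
  have h := hA.dotProduct_mulVec_nonneg x
  rw [star_trivial, dotProduct_add_transpose_mulVec_self] at h
  linarith

lemma PosDef.dotProduct_mulVec_pos_of_add_transpose {A : Matrix n n R}
    (hA : (A + Aᵀ).PosDef) {x : n → R} (hx : x ≠ 0) : 0 < x ⬝ᵥ (A *ᵥ x) := by
  have h := hA.dotProduct_mulVec_pos hx
  rw [star_trivial, dotProduct_add_transpose_mulVec_self] at h
  linarith

theorem isUnit_one_add_mul_of_posDef_add_transpose [DecidableEq n] {J Z : Matrix n n R}
    (hJ : (J + Jᵀ).PosDef) (hZ : (Z + Zᵀ).PosSemidef) : IsUnit (1 + J * Z) := by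
  rw [isUnit_iff_isUnit_det, isUnit_iff_ne_zero, Ne, ← exists_mulVec_eq_zero_iff]
  rintro ⟨v, hv, hker⟩
  set y := Z *ᵥ v
  have hv_eq : v = -(J *ᵥ y) := by
    rw [add_mulVec, one_mulVec, ← mulVec_mulVec] at hker
    exact eq_neg_of_add_eq_zero_left hker
  have hy : y = 0 := by
    by_contra hy
    have hZv : 0 ≤ y ⬝ᵥ v := by
      rw [dotProduct_comm]
      exact hZ.dotProduct_mulVec_nonneg_of_add_transpose v
    have hJy := hJ.dotProduct_mulVec_pos_of_add_transpose hy
    rw [hv_eq, dotProduct_neg] at hZv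
    linarith
  exact hv (by rw [hv_eq, hy, mulVec_zero, neg_zero])

end Matrix

theorem stmt2 (m : ℕ) (J Z : Matrix (Fin m) (Fin m) ℝ)
    (hJ : (J + Jᵀ).PosDef) (hZ : (Z + Zᵀ).PosSemidef) :
    IsUnit (1 + J * Z) :=
  isUnit_one_add_mul_of_posDef_add_transpose hJ hZ
end

section
/- Conversely, let δ ∈ ℝ^{m×m} satisfy det(I − δJ) ≠ 0 and δ(J + Jᵀ)δᵀ ≤ δ + δᵀ, where J + Jᵀ > 0. Then Z := δ(I − Jδ)^{-1} satisfies Z + Zᵀ ≥ 0 and δ = Z(I + JZ)^{-1}. -/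
/-!
With `B := 1 - δ J`, the push-through identity `δ (1 - J δ)⁻¹ = B⁻¹ δ` gives
`Z + Zᵀ = B⁻¹ δ + δᵀ B⁻ᵀ = B⁻¹ (δ Bᵀ + B δᵀ) B⁻ᵀ`, and `δ Bᵀ + B δᵀ = δ + δᵀ - δ (J + Jᵀ) δᵀ`
is positive semidefinite by hypothesis; congruence preserves this. The identity
`1 + J Z = (1 - J δ)⁻¹` inverts the transform.
-/

open Matrix

namespace Matrix

section PushThrough

variable {m n R : Type*} [Fintype m] [Fintype n] [DecidableEq n] [CommRing R]

theorem mul_nonsing_inv_one_sub_mul_comm [DecidableEq m] (A : Matrix m n R) (B : Matrix n m R)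
    (h : IsUnit (1 - A * B).det) : A * (1 - B * A)⁻¹ = (1 - A * B)⁻¹ * A := by
  have h' : IsUnit (1 - B * A).det := det_one_sub_mul_comm A B ▸ h
  have hcomm : (1 - A * B) * A = A * (1 - B * A) := by
    rw [Matrix.sub_mul, Matrix.mul_sub, Matrix.one_mul, Matrix.mul_one, Matrix.mul_assoc]
  calc A * (1 - B * A)⁻¹
      = (1 - A * B)⁻¹ * ((1 - A * B) * A) * (1 - B * A)⁻¹ := by
        rw [← Matrix.mul_assoc, nonsing_inv_mul _ h, Matrix.one_mul]
    _ = (1 - A * B)⁻¹ * A := by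
        rw [hcomm, Matrix.mul_assoc, Matrix.mul_assoc, mul_nonsing_inv _ h', Matrix.mul_one]

theorem one_add_mul_mul_nonsing_inv_one_sub_mul (A : Matrix m n R) (B : Matrix n m R)
    (h : IsUnit (1 - B * A).det) : 1 + B * (A * (1 - B * A)⁻¹) = (1 - B * A)⁻¹ :=
  calc 1 + B * (A * (1 - B * A)⁻¹)
      = (1 - B * A) * (1 - B * A)⁻¹ + B * A * (1 - B * A)⁻¹ := by
        rw [mul_nonsing_inv _ h, Matrix.mul_assoc]
    _ = (1 - B * A)⁻¹ := by rw [← Matrix.add_mul, sub_add_cancel, Matrix.one_mul]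

theorem mul_nonsing_inv_one_sub_mul_mul_nonsing_inv_one_add_mul (A : Matrix m n R)
    (B : Matrix n m R) (h : IsUnit (1 - B * A).det) :
    A * (1 - B * A)⁻¹ * (1 + B * (A * (1 - B * A)⁻¹))⁻¹ = A := by
  rw [one_add_mul_mul_nonsing_inv_one_sub_mul A B h, nonsing_inv_nonsing_inv _ h,
    Matrix.mul_assoc, nonsing_inv_mul _ h, Matrix.mul_one]

end PushThrough

section Congruence

variable {n R : Type*} [Fintype n] [DecidableEq n] [CommRing R]

theorem nonsing_inv_mul_mul_transpose_add_mul_mul_transpose_nonsing_inv (B X Y : Matrix n n R)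
    (h : IsUnit B.det) : B⁻¹ * (X * Bᵀ + B * Y) * B⁻¹ᵀ = B⁻¹ * X + Y * B⁻¹ᵀ := by
  rw [Matrix.mul_add, Matrix.add_mul, Matrix.mul_assoc, Matrix.mul_assoc, ← transpose_mul,
    nonsing_inv_mul _ h, transpose_one, Matrix.mul_one, ← Matrix.mul_assoc,
    nonsing_inv_mul _ h, Matrix.one_mul]

variable [PartialOrder R] [StarRing R] [TrivialStar R]

theorem posSemidef_add_transpose_mul_nonsing_inv_one_sub_mul (J δ : Matrix n n R)
    (hdet : IsUnit (1 - δ * J).det) (hq : (δ + δᵀ - δ * (J + Jᵀ) * δᵀ).PosSemidef) :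
    (δ * (1 - J * δ)⁻¹ + (δ * (1 - J * δ)⁻¹)ᵀ).PosSemidef := by
  have hsplit : δ + δᵀ - δ * (J + Jᵀ) * δᵀ = δ * (1 - δ * J)ᵀ + (1 - δ * J) * δᵀ := by
    rw [transpose_sub, transpose_one, transpose_mul, Matrix.mul_sub, Matrix.sub_mul,
      Matrix.mul_add, Matrix.add_mul, Matrix.mul_one, Matrix.one_mul]
    simp only [Matrix.mul_assoc]
    abel
  have hZ : δ * (1 - J * δ)⁻¹ + (δ * (1 - J * δ)⁻¹)ᵀ
      = (1 - δ * J)⁻¹ * (δ + δᵀ - δ * (J + Jᵀ) * δᵀ) * (1 - δ * J)⁻¹ᵀ := by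
    rw [hsplit, nonsing_inv_mul_mul_transpose_add_mul_mul_transpose_nonsing_inv _ _ _ hdet,
      mul_nonsing_inv_one_sub_mul_comm δ J hdet, transpose_mul]
  have hcongr := hq.mul_mul_conjTranspose_same (1 - δ * J)⁻¹
  rwa [conjTranspose_eq_transpose_of_trivial, ← hZ] at hcongr

end Congruence

end Matrix

theorem stmt4_general (m : ℕ) (J δ : Matrix (Fin m) (Fin m) ℝ)
    (hdet : (1 - δ * J).det ≠ 0)
    (hq : (δ + δᵀ - δ * (J + Jᵀ) * δᵀ).PosSemidef)
    (Z : Matrix (Fin m) (Fin m) ℝ) (hZ : Z = δ * (1 - J * δ)⁻¹) :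
    (Z + Zᵀ).PosSemidef ∧ δ = Z * (1 + J * Z)⁻¹ := by
  have hδJ : IsUnit (1 - δ * J).det := isUnit_iff_ne_zero.mpr hdet
  have hJδ : IsUnit (1 - J * δ).det := det_one_sub_mul_comm δ J ▸ hδJ
  subst hZ
  exact ⟨posSemidef_add_transpose_mul_nonsing_inv_one_sub_mul J δ hδJ hq,
    (mul_nonsing_inv_one_sub_mul_mul_nonsing_inv_one_add_mul δ J hJδ).symm⟩

theorem stmt4 (m : ℕ) (J δ : Matrix (Fin m) (Fin m) ℝ)
    (hJ : (J + Jᵀ).PosDef)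
    (hdet : (1 - δ * J).det ≠ 0)
    (hq : (δ + δᵀ - δ * (J + Jᵀ) * δᵀ).PosSemidef)
    (Z : Matrix (Fin m) (Fin m) ℝ) (hZ : Z = δ * (1 - J * δ)⁻¹) :
    (Z + Zᵀ).PosSemidef ∧ δ = Z * (1 + J * Z)⁻¹ :=
  stmt4_general m J δ hdet hq Z hZ
end
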